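/- Let X ∈ ℝ^{m×N} and 1 ≤ t ≤ N−1. Assume X_{≥t}ᵀX_{≥t} and X_{≥t+1}ᵀX_{≥t+1} are invertible, and set B = (X_{≥t}ᵀX_{≥t})⁻¹ ∈ ℝ^{(N−t+1)×(N−t+1)}. Then B₁₁ ≠ 0 and (X_{≥t+1}ᵀ X_{≥t+1})⁻¹ X_{≥t+1}ᵀ X_t = − B_{≥2,1} / B₁₁, where B₁₁ is the (1,1) entry of B and B_{≥2,1} ∈ ℝ^{N−t} is the first column of B with its first entry removed. -/

import Mathlib

open Matrix

/-- **Least-squares coefficients from the inverse Hessian block.**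
Let `X ∈ ℝ^{m×N}`, `1 ≤ t ≤ N−1`, with `X_{≥t}ᵀX_{≥t}` and `X_{≥t+1}ᵀX_{≥t+1}`
invertible, and `B = (X_{≥t}ᵀX_{≥t})⁻¹`.  Then `B₁₁ ≠ 0` and
`(X_{≥t+1}ᵀX_{≥t+1})⁻¹ X_{≥t+1}ᵀ X_t = −B_{≥2,1}/B₁₁`.
Here `At = X_{≥t}` (columns `t,…,N` of `X`, 1-based) and `At1 = X_{≥t+1}`. -/
theorem optq_inverse_hessian_column {m N t : ℕ} (ht1 : 1 ≤ t) (ht2 : t ≤ N - 1)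
    (X : Matrix (Fin m) (Fin N) ℝ)
    (At : Matrix (Fin m) (Fin (N - t + 1)) ℝ)
    (hAt : At = Matrix.of fun i (j : Fin (N - t + 1)) =>
      X i ⟨t - 1 + j.val, by have := j.isLt; omega⟩)
    (At1 : Matrix (Fin m) (Fin (N - t)) ℝ)
    (hAt1 : At1 = Matrix.of fun i (j : Fin (N - t)) =>
      X i ⟨t + j.val, by have := j.isLt; omega⟩)
    (hrank_t : IsUnit (Atᵀ * At).det)
    (hrank_t1 : IsUnit (At1ᵀ * At1).det)
    (B : Matrix (Fin (N - t + 1)) (Fin (N - t + 1)) ℝ)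
    (hB : B = (Atᵀ * At)⁻¹) :
    B 0 0 ≠ 0 ∧
      (At1ᵀ * At1)⁻¹ *ᵥ (At1ᵀ *ᵥ fun i => X i ⟨t - 1, by omega⟩) =
        fun j : Fin (N - t) =>
          -(B ⟨j.val + 1, by have := j.isLt; omega⟩ 0 / B 0 0) := by
  set x : Fin m → ℝ := fun i => X i ⟨t - 1, by omega⟩ with hx
  -- first column of At is x
  have hAt0 : ∀ i, At i 0 = x i := by
    intro i
    rw [hAt]
    simp only [of_apply]
    congr 1
  -- other columns of At are columns of At1
  have hAts : ∀ i (j : Fin (N - t)), At i j.succ = At1 i j := by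
    intro i j
    rw [hAt, hAt1]
    simp only [of_apply]
    congr 1
    simp [Fin.val_succ]
    omega
  have hAB : (Atᵀ * At) * B = 1 := by
    rw [hB]; exact mul_nonsing_inv _ hrank_t
  -- key linear relations from column 0 of hAB
  set b : Fin (N - t) → ℝ := fun l => B l.succ 0 with hb
  have key : ∀ j : Fin (N - t),
      ((At1ᵀ * At1) *ᵥ b) j = -(B 0 0) * (At1ᵀ *ᵥ x) j := by
    intro j
    have h := congrFun (congrFun hAB j.succ) 0
    rw [Matrix.mul_apply, Fin.sum_univ_succ,
      Matrix.one_apply_ne (Fin.succ_ne_zero j)] at h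
    have h0 : (Atᵀ * At) j.succ 0 = (At1ᵀ *ᵥ x) j := by
      simp only [Matrix.mul_apply, Matrix.mulVec, Matrix.transpose_apply,
        dotProduct]
      exact Finset.sum_congr rfl fun i _ => by rw [hAt0, hAts]
    have hs : ∀ l : Fin (N - t), (Atᵀ * At) j.succ l.succ = (At1ᵀ * At1) j l := by
      intro l
      simp only [Matrix.mul_apply, Matrix.transpose_apply]
      exact Finset.sum_congr rfl fun i _ => by rw [hAts, hAts]
    rw [h0] at h
    have hL : ((At1ᵀ * At1) *ᵥ b) j
        = ∑ l : Fin (N - t), (Atᵀ * At) j.succ l.succ * B l.succ 0 := by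
      simp only [Matrix.mulVec, dotProduct, hb]
      exact Finset.sum_congr rfl fun l _ => by rw [hs l]
    rw [hL]
    linarith [h]
  have hkey : (At1ᵀ * At1) *ᵥ b = fun j => -(B 0 0) * (At1ᵀ *ᵥ x) j :=
    funext key
  -- B is invertible
  have hBdet : IsUnit B.det := by
    rw [hB]; exact (Matrix.isUnit_nonsing_inv_det _ hrank_t)
  have hB00 : B 0 0 ≠ 0 := by
    intro h0
    -- then b = 0
    have hb0 : b = 0 := by
      have : (At1ᵀ * At1) *ᵥ b = 0 := by
        rw [hkey]; funext j; simp [h0]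
      have := congrArg (fun v => (At1ᵀ * At1)⁻¹ *ᵥ v) this
      simpa [Matrix.mulVec_mulVec, Matrix.nonsing_inv_mul _ hrank_t1] using this
    -- column 0 of B is zero, contradicting invertibility
    have hcol : B *ᵥ Pi.single 0 1 = 0 := by
      funext k
      have hk : B k 0 = 0 := by
        rcases Fin.eq_zero_or_eq_succ k with rfl | ⟨l, rfl⟩
        · exact h0
        · exact congrFun hb0 l
      simp [Matrix.mulVec_single, hk]
    have := congrArg (fun v => B⁻¹ *ᵥ v) hcol
    simp only [Matrix.mulVec_mulVec, Matrix.nonsing_inv_mul _ hBdet,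
      Matrix.one_mulVec, Matrix.mulVec_zero] at this
    have := congrFun this 0
    simp at this
  refine ⟨hB00, ?_⟩
  have hkey' : (At1ᵀ * At1) *ᵥ b = (-(B 0 0)) • (At1ᵀ *ᵥ x) := by
    rw [hkey]; rfl
  have h1 := congrArg (fun v => (At1ᵀ * At1)⁻¹ *ᵥ v) hkey'
  simp only [Matrix.mulVec_mulVec, Matrix.nonsing_inv_mul _ hrank_t1,
    Matrix.one_mulVec, Matrix.mulVec_smul] at h1
  -- h1 : b = (-(B 0 0)) • ((At1ᵀ * At1)⁻¹ *ᵥ (At1ᵀ *ᵥ x))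
  funext j
  show ((At1ᵀ * At1)⁻¹ *ᵥ (At1ᵀ *ᵥ x)) j = -(b j / B 0 0)
  have h2 := congrFun h1 j
  simp only [Pi.smul_apply, smul_eq_mul] at h2
  rw [h2]
  field_simp
  rw [Matrix.mulVec_mulVec]
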